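/- Union-bound step of the RCU bound: if X₁,…,X_M are i.i.d. codewords, Y the output given X₁, then P[⋃_{m=2}^{M} {P(Y|X_m) ≥ P(Y|X₁)}] ≤ E[min{1, (M−1)·P[P(Y|X̄) ≥ P(Y|X) | X, Y]}], where (X,Y,X̄) ~ P_X(x)P_{Y|X}(y|x)P_X(x̄). -/
import Mathlib


open Finset Real

/-- Union-bound step of the RCU bound. With `X₁,…,X_M` i.i.d. codewords `~ P_X` and `Y`
the channel output given `X₁`, the probability of the union
`⋃_{m=2}^M {P(Y|X_m) ≥ P(Y|X₁)}` equals
`∑_{x,y} P_X(x) W(y|x) (1 − (1 − ψ(x,y))^{M−1})`, where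
`ψ(x,y) = P[P(y|X̄) ≥ P(y|x)]` is the pairwise error probability; this is bounded by
`E[min{1,(M−1)·ψ(X,Y)}]`. -/
theorem rcu_union_bound_step
    {V Y : Type*} [Fintype V] [Fintype Y]
    (PX : V → ℝ) (hPX : ∀ x, 0 ≤ PX x) (hPXsum : ∑ x, PX x = 1)
    (W : V → Y → ℝ) (hW : ∀ x y, 0 ≤ W x y) (hWsum : ∀ x, ∑ y, W x y = 1)
    (M : ℕ) (hM : 1 ≤ M) :
    ∑ x : V, ∑ y : Y, PX x * W x y *
        (1 - (1 - ∑ x' : V, PX x' * (if W x' y ≥ W x y then (1 : ℝ) else 0)) ^ (M - 1)) ≤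
      ∑ x : V, ∑ y : Y, PX x * W x y *
        min 1 (((M : ℝ) - 1) *
          ∑ x' : V, PX x' * (if W x' y ≥ W x y then (1 : ℝ) else 0)) := by
  apply Finset.sum_le_sum
  intro x _
  apply Finset.sum_le_sum
  intro y _
  set ψ := ∑ x' : V, PX x' * (if W x' y ≥ W x y then (1 : ℝ) else 0) with hψ
  have hψ0 : 0 ≤ ψ := Finset.sum_nonneg fun x' _ => mul_nonneg (hPX x') (by split <;> norm_num)
  have hψ1 : ψ ≤ 1 := by
    rw [hψ]
    calc ∑ x' : V, PX x' * (if W x' y ≥ W x y then (1 : ℝ) else 0)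
        ≤ ∑ x' : V, PX x' := Finset.sum_le_sum fun x' _ => by
          split <;> simp [hPX x']
      _ = 1 := hPXsum
  apply mul_le_mul_of_nonneg_left _ (mul_nonneg (hPX x) (hW x y))
  rw [le_min_iff]
  constructor
  · have : (0:ℝ) ≤ (1 - ψ) ^ (M - 1) := pow_nonneg (by linarith) _
    linarith
  · have hb : 1 + (M - 1 : ℕ) * (-ψ) ≤ (1 + (-ψ)) ^ (M - 1) :=
      one_add_mul_le_pow (by linarith) (M - 1)
    have hc : ((M - 1 : ℕ) : ℝ) = (M : ℝ) - 1 := by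
      push_cast [Nat.cast_sub hM]; ring
    rw [hc, show (1 + -ψ) = 1 - ψ by ring] at hb
    linarith
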